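/- arXiv:1810.05690 — 2 statements merged into one kernel-verified Lean document; each statement's English description precedes it below -/
import Mathlib

section
/- Let N = n+1 be even with n ≥ 3, let λ ∈ Λ_N with λ_1 = 1, and let j ∈ {2, …, N} satisfy λ_j = 1. Define y ∈ ℝ^n by y = x' + Σ_{k=1}^{j−1} e_k where x'_i = Σ_{k=1}^i λ_k. Then for every a ∈ S one has ⟨y, a⟩ + ω(a) ≥ 0, and equality holds if and only if a ∈ {0} ∪ {v_i(λ) : 1 ≤ i ≤ N, i ≠ j}. In particular, the simplex conv({0} ∪ {v_i(λ) : i ≠ j}) is the projection of a lower facet of the lifted point configuration {(a, ω(a)) : a ∈ S}. -/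
open Finset

/-- `eVec n k` is the standard basis vector `e_k` of `ℝ^n` for `1 ≤ k ≤ n`,
with the convention `e_0 = e_{n+1} = 0`. -/
noncomputable def eVec (n : ℕ) (k : ℕ) : Fin n → ℝ := fun t => if (t : ℕ) + 1 = k then 1 else 0

/-- `dVec n i = e_{i-1} - e_i`. -/
noncomputable def dVec (n : ℕ) (i : ℕ) : Fin n → ℝ := eVec n (i - 1) - eVec n i

/-- `vPt n l i = λ_i (e_{i-1} - e_i)`. -/
noncomputable def vPt (n : ℕ) (l : ℕ → ℝ) (i : ℕ) : Fin n → ℝ := l i • dVec n i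

/-- The point configuration `S = {0} ∪ {±(e_{i-1} - e_i) : 1 ≤ i ≤ N}`. -/
noncomputable def Sconf (n N : ℕ) : Set (Fin n → ℝ) :=
  insert 0 {x | ∃ i ∈ Finset.Icc 1 N, x = dVec n i ∨ x = -dVec n i}

/-- The lifting function for even `N`: `ω(0) = 0`, `ω(±e_1) = 2`, `ω(a) = 1` otherwise. -/
noncomputable def wEven (n : ℕ) (a : Fin n → ℝ) : ℝ :=
  if a = 0 then 0 else if a = eVec n 1 ∨ a = -eVec n 1 then 2 else 1

/-- Standard inner product on `ℝ^n`. -/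
noncomputable def dotR (n : ℕ) (x y : Fin n → ℝ) : ℝ := ∑ i, x i * y i

lemma eVec_eq_zero (n k : ℕ) (h : k = 0 ∨ n < k) : eVec n k = 0 := by
  funext t
  have : (t : ℕ) + 1 ≠ k := by rcases h with h | h <;> omega
  simp [eVec, this]

lemma dotR_eVec (n : ℕ) (y : Fin n → ℝ) (m : ℕ) (h1 : 1 ≤ m) (h2 : m ≤ n) :
    dotR n y (eVec n m) = y ⟨m - 1, by omega⟩ := by
  unfold dotR eVec
  rw [Finset.sum_eq_single (⟨m - 1, by omega⟩ : Fin n)]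
  · rw [if_pos (by show m - 1 + 1 = m; omega), mul_one]
  · intro t _ ht
    have : (t : ℕ) + 1 ≠ m := by
      intro h; apply ht; apply Fin.ext; show (t : ℕ) = m - 1; omega
    simp [this]
  · intro h; exact absurd (Finset.mem_univ _) h

lemma dotR_eVec_zero (n : ℕ) (y : Fin n → ℝ) (m : ℕ) (h : m = 0 ∨ n < m) :
    dotR n y (eVec n m) = 0 := by
  rw [eVec_eq_zero n m h]; simp [dotR]

lemma dotR_neg (n : ℕ) (y v : Fin n → ℝ) : dotR n y (-v) = -dotR n y v := by
  simp [dotR, mul_neg, Finset.sum_neg_distrib]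

lemma dVec_one (n : ℕ) : dVec n 1 = -eVec n 1 := by
  funext t
  simp [dVec, eVec]

lemma eVec_one_ne (n : ℕ) (hn : 1 ≤ n) : eVec n 1 ≠ 0 := by
  intro h
  have := congrFun h ⟨0, by omega⟩
  simp [eVec] at this

lemma wEven_e1 (n : ℕ) (hn : 1 ≤ n) :
    wEven n (eVec n 1) = 2 ∧ wEven n (-eVec n 1) = 2 := by
  constructor
  · rw [wEven, if_neg (eVec_one_ne n hn), if_pos (Or.inl rfl)]
  · rw [wEven, if_neg (neg_ne_zero.mpr (eVec_one_ne n hn)), if_pos (Or.inr rfl)]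

lemma dVec_ne (n : ℕ) (hn : 3 ≤ n) (i : ℕ) (h1 : 2 ≤ i) (h2 : i ≤ n + 1) :
    dVec n i ≠ 0 ∧ dVec n i ≠ eVec n 1 ∧ dVec n i ≠ -eVec n 1 := by
  rcases Nat.lt_or_ge i (n + 1) with hlt | hge
  · set t : Fin n := ⟨i - 1, by omega⟩ with ht
    have htv : (t : ℕ) = i - 1 := rfl
    have e0 : eVec n (i - 1) t = 0 := by
      show (if (t : ℕ) + 1 = i - 1 then (1 : ℝ) else 0) = 0
      rw [if_neg (by omega)]
    have e2 : eVec n i t = 1 := by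
      show (if (t : ℕ) + 1 = i then (1 : ℝ) else 0) = 1
      rw [if_pos (by omega)]
    have e3 : eVec n 1 t = 0 := by
      show (if (t : ℕ) + 1 = 1 then (1 : ℝ) else 0) = 0
      rw [if_neg (by omega)]
    have hd : dVec n i t = -1 := by
      show eVec n (i - 1) t - eVec n i t = -1
      rw [e0, e2]; ring
    refine ⟨fun h => ?_, fun h => ?_, fun h => ?_⟩
    · have := congrFun h t; rw [hd] at this; simp at this
    · have := congrFun h t; rw [hd, e3] at this; norm_num at this
    · have := congrFun h t; rw [hd, Pi.neg_apply, e3] at this; norm_num at this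
  · have hi : i = n + 1 := by omega
    subst hi
    set t : Fin n := ⟨n - 1, by omega⟩ with ht
    have htv : (t : ℕ) = n - 1 := rfl
    have e0 : eVec n (n + 1 - 1) t = 1 := by
      show (if (t : ℕ) + 1 = n + 1 - 1 then (1 : ℝ) else 0) = 1
      rw [if_pos (by omega)]
    have e2 : eVec n (n + 1) t = 0 := by
      show (if (t : ℕ) + 1 = n + 1 then (1 : ℝ) else 0) = 0
      rw [if_neg (by omega)]
    have e3 : eVec n 1 t = 0 := by
      show (if (t : ℕ) + 1 = 1 then (1 : ℝ) else 0) = 0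
      rw [if_neg (by omega)]
    have hd : dVec n (n + 1) t = 1 := by
      show eVec n (n + 1 - 1) t - eVec n (n + 1) t = 1
      rw [e0, e2]; ring
    refine ⟨fun h => ?_, fun h => ?_, fun h => ?_⟩
    · have := congrFun h t; rw [hd] at this; simp at this
    · have := congrFun h t; rw [hd, e3] at this; norm_num at this
    · have := congrFun h t; rw [hd, Pi.neg_apply, e3] at this; norm_num at this

lemma wEven_mid (n : ℕ) (hn : 3 ≤ n) (i : ℕ) (h1 : 2 ≤ i) (h2 : i ≤ n + 1) :
    wEven n (dVec n i) = 1 ∧ wEven n (-dVec n i) = 1 := by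
  obtain ⟨hz, he, hne⟩ := dVec_ne n hn i h1 h2
  constructor
  · rw [wEven, if_neg hz, if_neg (by rintro (h | h); exacts [he h, hne h])]
  · rw [wEven, if_neg (neg_ne_zero.mpr hz), if_neg ?_]
    rintro (h | h)
    · exact hne (neg_eq_iff_eq_neg.mp h)
    · exact he (neg_inj.mp h)

theorem stmt6 (n N : ℕ) (hn : 3 ≤ n) (hN : N = n + 1) (hNe : Even N)
    (l : ℕ → ℝ)
    (hl1 : ∀ i ∈ Finset.Icc 1 N, l i = 1 ∨ l i = -1)
    (hl2 : ∑ i ∈ Finset.Icc 1 N, l i = 0)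
    (hlam1 : l 1 = 1)
    (j : ℕ) (hj : j ∈ Finset.Icc 2 N) (hlamj : l j = 1)
    (x' y : Fin n → ℝ)
    (hx' : ∀ i : Fin n, x' i = ∑ k ∈ Finset.Icc 1 ((i : ℕ) + 1), l k)
    (hy : y = x' + ∑ k ∈ Finset.Icc 1 (j - 1), eVec n k) :
    ∀ a ∈ Sconf n N,
      0 ≤ dotR n y a + wEven n a ∧
      (dotR n y a + wEven n a = 0 ↔
        a ∈ insert (0 : Fin n → ℝ)
          {x | ∃ i ∈ Finset.Icc 1 N, i ≠ j ∧ x = vPt n l i}) := by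
  subst hN
  have hj2 : 2 ≤ j := (Finset.mem_Icc.mp hj).1
  have hjN : j ≤ n + 1 := (Finset.mem_Icc.mp hj).2
  have hsum : ∀ m : ℕ, ∑ k ∈ Finset.Icc 1 (m + 1), l k
      = (∑ k ∈ Finset.Icc 1 m, l k) + l (m + 1) :=
    fun m => Finset.sum_Icc_succ_top (by omega) l
  have hyY : ∀ t : Fin n, y t = (∑ k ∈ Finset.Icc 1 ((t : ℕ) + 1), l k)
      + (if (t : ℕ) + 1 ≤ j - 1 then 1 else 0) := by
    intro t
    rw [hy, Pi.add_apply, hx' t, Finset.sum_apply]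
    congr 1
    have : (∑ k ∈ Finset.Icc 1 (j - 1), eVec n k t)
        = ∑ k ∈ Finset.Icc 1 (j - 1), (if (t : ℕ) + 1 = k then (1 : ℝ) else 0) := rfl
    rw [this, Finset.sum_ite_eq]
    by_cases hc : (t : ℕ) + 1 ≤ j - 1
    · rw [if_pos (Finset.mem_Icc.mpr ⟨by omega, hc⟩), if_pos hc]
    · rw [if_neg (fun hm => hc (Finset.mem_Icc.mp hm).2), if_neg hc]
  have hYm : ∀ m : ℕ, 1 ≤ m → m ≤ n →
      dotR n y (eVec n m) = (∑ k ∈ Finset.Icc 1 m, l k) + (if m ≤ j - 1 then 1 else 0) := by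
    intro m h1 h2
    rw [dotR_eVec n y m h1 h2, hyY ⟨m - 1, by omega⟩]
    have hm : ((⟨m - 1, by omega⟩ : Fin n) : ℕ) + 1 = m := by
      show m - 1 + 1 = m; omega
    rw [hm]
  have hD : ∀ i, 1 ≤ i → i ≤ n + 1 →
      dotR n y (dVec n i) = -(l i) + (if i = j then 1 else 0) - (if i = 1 then 1 else 0) := by
    intro i h1 h2
    obtain ⟨i', rfl⟩ : ∃ i', i = i' + 1 := ⟨i - 1, by omega⟩
    have hd : dotR n y (dVec n (i' + 1))
        = dotR n y (eVec n i') - dotR n y (eVec n (i' + 1)) := by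
      simp [dVec, dotR, Nat.add_sub_cancel, mul_sub, Finset.sum_sub_distrib]
    rcases Nat.eq_zero_or_pos i' with rfl | hpos
    · rw [hd, dotR_eVec_zero n y 0 (Or.inl rfl), hYm 1 le_rfl (by omega)]
      rw [Finset.Icc_self, Finset.sum_singleton, hlam1]
      rw [if_pos (by omega : (1 : ℕ) ≤ j - 1)]
      rw [if_neg (by omega : ¬ (0 + 1 = j)), if_pos (by omega : 0 + 1 = 1)]
      norm_num
    · rcases Nat.lt_or_ge i' n with hlt | hge
      · rw [hd, hYm i' hpos (by omega), hYm (i' + 1) (by omega) (by omega), hsum i']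
        rw [if_neg (by omega : ¬ (i' + 1 = 1))]
        by_cases hij : i' + 1 = j
        · rw [if_pos hij, if_pos (by omega), if_neg (by omega)]; ring
        · rw [if_neg hij]
          by_cases hlt2 : i' + 1 ≤ j - 1
          · rw [if_pos hlt2, if_pos (by omega)]; ring
          · rw [if_neg hlt2, if_neg (by omega)]; ring
      · have hin : i' = n := by omega
        rw [hd, hin, hYm n (by omega) le_rfl,
          dotR_eVec_zero n y (n + 1) (Or.inr (by omega))]
        have hXn : ∑ k ∈ Finset.Icc 1 n, l k = -(l (n + 1)) := by
          have h' := hsum n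
          linarith
        rw [hXn, if_neg (by omega : ¬ (n + 1 = 1))]
        by_cases hij : n + 1 = j
        · rw [if_pos hij, if_pos (by omega)]; try ring
        · rw [if_neg hij, if_neg (by omega)]; try ring
  have key : ∀ i, 1 ≤ i → i ≤ n + 1 →
      (dotR n y (dVec n i) + wEven n (dVec n i)
        = -(l i) + (if i = j then 1 else 0) + 1) ∧
      (dotR n y (-dVec n i) + wEven n (-dVec n i)
        = l i - (if i = j then 1 else 0) + (if i = 1 then 2 else 0) + 1) := by
    intro i h1 h2
    have hD' := hD i h1 h2
    have hneg : dotR n y (-dVec n i) = -dotR n y (dVec n i) := dotR_neg n y _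
    rcases Nat.lt_or_ge i 2 with hi1 | hi2
    · have hie : i = 1 := by omega
      subst hie
      have w1 : wEven n (dVec n 1) = 2 := by
        rw [dVec_one]; exact (wEven_e1 n (by omega)).2
      have w2 : wEven n (-dVec n 1) = 2 := by
        rw [dVec_one, neg_neg]; exact (wEven_e1 n (by omega)).1
      have h1j : ¬ (1 = j) := by omega
      constructor
      · rw [w1, hD', if_neg h1j]
        norm_num
        try ring
      · rw [w2, hneg, hD', if_neg h1j]
        norm_num
        try ring
    · obtain ⟨w1, w2⟩ := wEven_mid n hn i hi2 h2
      have hne1 : ¬ (i = 1) := by omega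
      constructor
      · rw [w1, hD', if_neg hne1]; ring
      · rw [w2, hneg, hD', if_neg hne1, if_neg hne1]; ring
  have memE : ∀ b, b ∈ insert (0 : Fin n → ℝ)
      {x | ∃ i ∈ Finset.Icc 1 (n + 1), i ≠ j ∧ x = vPt n l i} →
      dotR n y b + wEven n b = 0 := by
    intro b hb
    rcases Set.mem_insert_iff.mp hb with rfl | ⟨i, hi, hij, rfl⟩
    · simp [dotR, wEven]
    · obtain ⟨hi1, hi2⟩ := Finset.mem_Icc.mp hi
      rcases hl1 i hi with h | h
      · have hv : vPt n l i = dVec n i := by rw [vPt, h, one_smul]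
        rw [hv, (key i hi1 hi2).1, h, if_neg hij]; norm_num
      · have hne1 : i ≠ 1 := fun e => by rw [e, hlam1] at h; norm_num at h
        have hv : vPt n l i = -dVec n i := by rw [vPt, h, neg_one_smul]
        rw [hv, (key i hi1 hi2).2, h, if_neg hij, if_neg hne1]; norm_num
  intro a ha
  simp only [Sconf, Set.mem_insert_iff, Set.mem_setOf_eq] at ha
  rcases ha with rfl | ⟨i, hi, hcase⟩
  · refine ⟨by simp [dotR, wEven], fun _ => Set.mem_insert _ _, fun _ => by simp [dotR, wEven]⟩
  · obtain ⟨hi1, hi2⟩ := Finset.mem_Icc.mp hi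
    rcases hcase with rfl | rfl
    · have hE := (key i hi1 hi2).1
      refine ⟨?_, ?_, fun hm => memE _ hm⟩
      · rw [hE]
        rcases hl1 i hi with h | h <;> rw [h] <;> split_ifs <;> norm_num
      · intro h0
        rw [hE] at h0
        rcases hl1 i hi with h | h
        · by_cases hij : i = j
          · rw [h, if_pos hij] at h0; norm_num at h0
          · exact Set.mem_insert_iff.mpr
              (Or.inr ⟨i, hi, hij, by rw [vPt, h, one_smul]⟩)
        · rw [h] at h0; split_ifs at h0 <;> norm_num at h0
    · have hE := (key i hi1 hi2).2
      refine ⟨?_, ?_, fun hm => memE _ hm⟩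
      · rw [hE]
        rcases hl1 i hi with h | h
        · rw [h]; split_ifs <;> norm_num
        · by_cases hij : i = j
          · rw [hij, hlamj] at h; norm_num at h
          · rw [h, if_neg hij]; split_ifs <;> norm_num
      · intro h0
        rw [hE] at h0
        rcases hl1 i hi with h | h
        · rw [h] at h0; split_ifs at h0 <;> norm_num at h0
        · have hne1 : i ≠ 1 := fun e => by rw [e, hlam1] at h; norm_num at h
          by_cases hij : i = j
          · rw [hij, hlamj] at h; norm_num at h
          · exact Set.mem_insert_iff.mpr
              (Or.inr ⟨i, hi, hij, by rw [vPt, h, neg_one_smul]⟩)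
end

section
/- Let N = n+1 be even with n ≥ 3. Then the adjacency polytope is covered by the simplices of Δ_N: conv(S) = ⋃_{λ ∈ Λ_N} ⋃_{m : λ_m = λ_1} conv({0} ∪ {v_i(λ) : 1 ≤ i ≤ N, i ≠ m}), where the inner union is over all indices m ∈ {1, …, N} with λ_m = λ_1. -/
open Finset

/-- The index set `Λ_N` for even `N`, as functions `ℕ → ℝ` with coordinates `±1`
on `{1, …, N}` and coordinate sum `0`. -/
def LambdaEven (N : ℕ) : Set (ℕ → ℝ) :=
  {l | (∀ i ∈ Finset.Icc 1 N, l i = 1 ∨ l i = -1) ∧ (∑ i ∈ Finset.Icc 1 N, l i) = 0}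

/-! ### Auxiliary lemmas -/

lemma eVec_zero (n : ℕ) : eVec n 0 = 0 := by
  funext t; simp [eVec]

lemma eVec_top (n : ℕ) : eVec n (n+1) = 0 := by
  funext t; simp [eVec]; omega

lemma sum_dVec (n N : ℕ) (hN : N = n + 1) : ∑ i ∈ Icc 1 N, dVec n i = 0 := by
  rw [show Icc 1 N = Ico 1 (N+1) by rfl, Finset.sum_Ico_eq_sum_range]
  have : ∀ j ∈ Finset.range (N + 1 - 1), dVec n (1 + j) = eVec n j - eVec n (j+1) := by
    intro j _
    rw [dVec, show 1+j-1 = j from by omega, show 1+j = j+1 from by omega]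
  rw [Finset.sum_congr rfl this, Finset.sum_range_sub' (eVec n)]
  simp [hN, eVec_zero, eVec_top]

lemma hull_sub (n N : ℕ) {x : Fin n → ℝ} (hx : x ∈ convexHull ℝ (Sconf n N)) :
    ∃ t : ℕ → ℝ, (∑ i ∈ Icc 1 N, |t i|) ≤ 1 ∧ x = ∑ i ∈ Icc 1 N, t i • dVec n i := by
  set T : Set (Fin n → ℝ) :=
    {x | ∃ t : ℕ → ℝ, (∑ i ∈ Icc 1 N, |t i|) ≤ 1 ∧ x = ∑ i ∈ Icc 1 N, t i • dVec n i} with hT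
  have hconv : Convex ℝ T := by
    rintro x ⟨t, ht1, rfl⟩ y ⟨s, hs1, rfl⟩ a b ha hb hab
    refine ⟨fun i => a * t i + b * s i, ?_, ?_⟩
    · calc ∑ i ∈ Icc 1 N, |a * t i + b * s i|
          ≤ ∑ i ∈ Icc 1 N, (a * |t i| + b * |s i|) := by
            apply Finset.sum_le_sum
            intro i _
            calc |a * t i + b * s i| ≤ |a * t i| + |b * s i| := abs_add_le _ _
              _ = a * |t i| + b * |s i| := by
                  rw [abs_mul, abs_mul, abs_of_nonneg ha, abs_of_nonneg hb]
        _ = a * (∑ i ∈ Icc 1 N, |t i|) + b * (∑ i ∈ Icc 1 N, |s i|) := by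
            rw [Finset.sum_add_distrib, Finset.mul_sum, Finset.mul_sum]
        _ ≤ a * 1 + b * 1 := by
            gcongr
        _ = 1 := by linarith
    · rw [Finset.smul_sum, Finset.smul_sum, ← Finset.sum_add_distrib]
      apply Finset.sum_congr rfl
      intro i _
      rw [add_smul, mul_smul, mul_smul]
  have hsub : Sconf n N ⊆ T := by
    rintro x (rfl | ⟨j, hj, (rfl | rfl)⟩)
    · exact ⟨0, by simp, by simp⟩
    · refine ⟨fun i => if i = j then 1 else 0, ?_, ?_⟩
      · simp only [apply_ite abs, abs_one, abs_zero]
        simp [hj]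
      · simp [ite_smul, hj]
    · refine ⟨fun i => if i = j then -1 else 0, ?_, ?_⟩
      · simp only [apply_ite abs, abs_neg, abs_one, abs_zero]
        simp [hj]
      · simp [ite_smul, hj]
  exact convexHull_min hsub hconv hx

open scoped Classical in
lemma median_le (N k : ℕ) (hN2 : N = 2 * k) (t : ℕ → ℝ) (c : ℝ)
    (hA : ((Icc 1 N).filter (fun i => c < t i)).card ≤ k)
    (hB : ((Icc 1 N).filter (fun i => t i < c)).card ≤ k) :
    ∑ i ∈ Icc 1 N, |t i - c| ≤ ∑ i ∈ Icc 1 N, |t i| := by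
  have hcardIcc : (Icc 1 N).card = N := by simp [Nat.card_Icc]
  rcases le_or_gt 0 c with hc | hc
  · have step : ∑ i ∈ Icc 1 N, |t i - c|
        ≤ ∑ i ∈ Icc 1 N, (|t i| + (if t i < c then c else -c)) := by
      apply Finset.sum_le_sum
      intro i _
      rcases lt_or_ge (t i) c with h | h
      · rw [if_pos h, abs_of_nonpos (by linarith)]
        nlinarith [neg_abs_le (t i), le_abs_self (t i)]
      · rw [if_neg (not_lt.2 h), abs_of_nonneg (by linarith), abs_of_nonneg (by linarith)]
        linarith
    have hpsi : ∑ i ∈ Icc 1 N, (if t i < c then c else -c)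
        = (((Icc 1 N).filter (fun i => t i < c)).card : ℝ) * (2*c) - N * c := by
      have hcg : ∀ i ∈ Icc 1 N,
          (if t i < c then c else -c) = (if t i < c then 2*c else 0) - c := by
        intro i _; split <;> ring
      rw [Finset.sum_congr rfl hcg, Finset.sum_sub_distrib, ← Finset.sum_filter,
        Finset.sum_const, Finset.sum_const, hcardIcc, nsmul_eq_mul, nsmul_eq_mul]
    have h1 : (((Icc 1 N).filter (fun i => t i < c)).card : ℝ) ≤ k := by exact_mod_cast hB
    have h2 : (N : ℝ) = 2 * k := by exact_mod_cast hN2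
    calc ∑ i ∈ Icc 1 N, |t i - c|
        ≤ ∑ i ∈ Icc 1 N, (|t i| + (if t i < c then c else -c)) := step
      _ = (∑ i ∈ Icc 1 N, |t i|) + (∑ i ∈ Icc 1 N, (if t i < c then c else -c)) :=
          Finset.sum_add_distrib
      _ ≤ ∑ i ∈ Icc 1 N, |t i| := by rw [hpsi]; nlinarith
  · have step : ∑ i ∈ Icc 1 N, |t i - c|
        ≤ ∑ i ∈ Icc 1 N, (|t i| + (if c < t i then -c else c)) := by
      apply Finset.sum_le_sum
      intro i _
      rcases lt_or_ge c (t i) with h | h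
      · rw [if_pos h, abs_of_nonneg (by linarith)]
        nlinarith [neg_abs_le (t i), le_abs_self (t i)]
      · rw [if_neg (not_lt.2 h), abs_of_nonpos (by linarith), abs_of_nonpos (by linarith)]
        linarith
    have hpsi : ∑ i ∈ Icc 1 N, (if c < t i then -c else c)
        = (((Icc 1 N).filter (fun i => c < t i)).card : ℝ) * (-(2*c)) + N * c := by
      have hcg : ∀ i ∈ Icc 1 N,
          (if c < t i then -c else c) = (if c < t i then -(2*c) else 0) + c := by
        intro i _; split <;> ring
      rw [Finset.sum_congr rfl hcg, Finset.sum_add_distrib, ← Finset.sum_filter,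
        Finset.sum_const, Finset.sum_const, hcardIcc, nsmul_eq_mul, nsmul_eq_mul]
    have h1 : (((Icc 1 N).filter (fun i => c < t i)).card : ℝ) ≤ k := by exact_mod_cast hA
    have h2 : (N : ℝ) = 2 * k := by exact_mod_cast hN2
    calc ∑ i ∈ Icc 1 N, |t i - c|
        ≤ ∑ i ∈ Icc 1 N, (|t i| + (if c < t i then -c else c)) := step
      _ = (∑ i ∈ Icc 1 N, |t i|) + (∑ i ∈ Icc 1 N, (if c < t i then -c else c)) :=
          Finset.sum_add_distrib
      _ ≤ ∑ i ∈ Icc 1 N, |t i| := by rw [hpsi]; nlinarith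

lemma card_filter_fin (N : ℕ) (q : ℕ → Prop) [DecidablePred q] :
    ((Icc 1 N).filter q).card = (univ.filter (fun j : Fin N => q (j.val + 1))).card := by
  symm
  apply Finset.card_bij (fun (j : Fin N) _ => j.val + 1)
  · intro j hj
    simp only [mem_filter, mem_Icc] at *
    exact ⟨⟨by omega, by omega⟩, hj.2⟩
  · intro a ha b hb hab
    ext
    omega
  · intro i hi
    simp only [mem_filter, mem_Icc] at hi
    exact ⟨⟨i - 1, by omega⟩, by simpa [Nat.sub_add_cancel hi.1.1] using hi.2,
      show i - 1 + 1 = i from by omega⟩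

lemma card_filter_perm {N : ℕ} (σ : Equiv.Perm (Fin N)) (q : Fin N → Prop) [DecidablePred q] :
    (univ.filter (fun j => q (σ j))).card = (univ.filter q).card := by
  apply Finset.card_bij (fun j _ => σ j)
  · intro j hj; simp_all
  · intro a _ b _ hab; exact σ.injective hab
  · intro j hj
    exact ⟨σ.symm j, by simp_all, by simp⟩

lemma boundA (N : ℕ) (t : ℕ → ℝ) (c : ℝ) (σ : Equiv.Perm (Fin N))
    (hg : Monotone (fun j => t ((σ j).val + 1))) (p : Fin N)
    (hc : t ((σ p).val + 1) ≤ c) :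
    ((Icc 1 N).filter fun i => c < t i).card ≤ N - 1 - p.val := by
  set g : Fin N → ℝ := fun j => t ((σ j).val + 1) with hgdef
  calc ((Icc 1 N).filter fun i => c < t i).card
      = (univ.filter fun j : Fin N => c < t (j.val + 1)).card :=
        card_filter_fin N (fun i => c < t i)
    _ = (univ.filter fun j : Fin N => c < g j).card :=
        (card_filter_perm σ (fun j => c < t (j.val + 1))).symm
    _ ≤ (univ.filter fun j : Fin N => g p < g j).card := by
        apply Finset.card_le_card
        intro j hj
        simp only [mem_filter, mem_univ, true_and] at *
        exact lt_of_le_of_lt hc hj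
    _ ≤ (Ioi p).card := by
        apply Finset.card_le_card
        intro j hj
        simp only [mem_filter, mem_Ioi, mem_univ, true_and] at *
        by_contra h
        exact absurd (hg (le_of_not_gt h)) (not_le.2 hj)
    _ = N - 1 - p.val := Fin.card_Ioi p

lemma boundB (N : ℕ) (t : ℕ → ℝ) (c : ℝ) (σ : Equiv.Perm (Fin N))
    (hg : Monotone (fun j => t ((σ j).val + 1))) (p : Fin N)
    (hc : c ≤ t ((σ p).val + 1)) :
    ((Icc 1 N).filter fun i => t i < c).card ≤ p.val := by
  set g : Fin N → ℝ := fun j => t ((σ j).val + 1) with hgdef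
  calc ((Icc 1 N).filter fun i => t i < c).card
      = (univ.filter fun j : Fin N => t (j.val + 1) < c).card :=
        card_filter_fin N (fun i => t i < c)
    _ = (univ.filter fun j : Fin N => g j < c).card :=
        (card_filter_perm σ (fun j => t (j.val + 1) < c)).symm
    _ ≤ (univ.filter fun j : Fin N => g j < g p).card := by
        apply Finset.card_le_card
        intro j hj
        simp only [mem_filter, mem_univ, true_and] at *
        exact lt_of_lt_of_le hj hc
    _ ≤ (Iio p).card := by
        apply Finset.card_le_card
        intro j hj
        simp only [mem_filter, mem_Iio, mem_univ, true_and] at *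
        by_contra h
        exact absurd (hg (le_of_not_gt h)) (not_le.2 hj)
    _ = p.val := Fin.card_Iio p

lemma build (N k : ℕ) (hN2 : N = 2 * k) (hk : 1 ≤ k) (t : ℕ → ℝ) (c : ℝ)
    (hA : ((Icc 1 N).filter fun i => c < t i).card ≤ k)
    (hB : ((Icc 1 N).filter fun i => t i < c).card ≤ k)
    (hsel : (t 1 = c) ∨ (c < t 1 ∧ ((Icc 1 N).filter fun i => c < t i).card + 1 ≤ k)
      ∨ (t 1 < c ∧ ((Icc 1 N).filter fun i => t i < c).card + 1 ≤ k)) :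
    ∃ (m : ℕ) (W : Finset ℕ), m ∈ Icc 1 N ∧ t m = c ∧ W ⊆ Icc 1 N ∧ W.card = k ∧
      (∀ i ∈ Icc 1 N, (c < t i → i ∈ W) ∧ (t i < c → i ∉ W)) ∧ ((1 ∈ W) ↔ (m ∈ W)) := by
  set A := ((Icc 1 N).filter fun i => c < t i) with hAdef
  set B := ((Icc 1 N).filter fun i => t i < c) with hBdef
  set Z := ((Icc 1 N).filter fun i => t i = c) with hZdef
  have hcardIcc : (Icc 1 N).card = N := by simp [Nat.card_Icc]
  have hone : (1 : ℕ) ∈ Icc 1 N := by simp; omega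
  have hpart : A.card + B.card + Z.card = N := by
    rw [hAdef, hBdef, hZdef, Finset.card_filter, Finset.card_filter, Finset.card_filter,
      ← Finset.sum_add_distrib, ← Finset.sum_add_distrib]
    have hcg : ∀ i ∈ Icc 1 N,
        (((if c < t i then 1 else 0) + (if t i < c then 1 else 0)) +
          (if t i = c then 1 else 0)) = 1 := by
      intro i _
      rcases lt_trichotomy (t i) c with h | h | h
      · rw [if_neg (by exact not_lt.2 h.le), if_pos h, if_neg (ne_of_lt h)]
      · rw [if_neg (by simp [h]), if_neg (by simp [h]), if_pos h]
      · rw [if_pos h, if_neg (not_lt.2 h.le), if_neg (ne_of_gt h)]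
    rw [Finset.sum_congr rfl hcg, Finset.sum_const, hcardIcc, smul_eq_mul, mul_one]
  have hWz : k - A.card ≤ Z.card := by omega
  obtain ⟨Wz, hWzZ, hWzcard⟩ := Finset.exists_subset_card_eq hWz
  have hdisj : Disjoint A Wz := by
    rw [Finset.disjoint_left]
    intro a haA haWz
    have h1 : c < t a := (Finset.mem_filter.1 haA).2
    have h2 : t a = c := (Finset.mem_filter.1 (hWzZ haWz)).2
    exact absurd h2 (ne_of_gt h1)
  set W := A ∪ Wz with hWdef
  have hWsub : W ⊆ Icc 1 N := by
    apply Finset.union_subset (Finset.filter_subset _ _)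
    exact hWzZ.trans (Finset.filter_subset _ _)
  have hWcard : W.card = k := by
    rw [hWdef, Finset.card_union_of_disjoint hdisj, hWzcard]
    omega
  have hsign : ∀ i ∈ Icc 1 N, (c < t i → i ∈ W) ∧ (t i < c → i ∉ W) := by
    intro i hi
    constructor
    · intro h
      exact Finset.mem_union_left _ (Finset.mem_filter.2 ⟨hi, h⟩)
    · intro h hiW
      rcases Finset.mem_union.1 hiW with h1 | h1
      · exact absurd (Finset.mem_filter.1 h1).2 (not_lt.2 h.le)
      · exact absurd (Finset.mem_filter.1 (hWzZ h1)).2 (ne_of_lt h)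
  rcases hsel with h1 | ⟨h2a, h2b⟩ | ⟨h3a, h3b⟩
  · exact ⟨1, W, hone, h1, hWsub, hWcard, hsign, Iff.rfl⟩
  · have hne : Wz.Nonempty := by
      rw [← Finset.card_pos, hWzcard]
      omega
    obtain ⟨m, hm⟩ := hne
    have hmZ := hWzZ hm
    refine ⟨m, W, (Finset.filter_subset _ _) hmZ, (Finset.mem_filter.1 hmZ).2,
      hWsub, hWcard, hsign, ?_⟩
    constructor
    · intro _; exact Finset.mem_union_right _ hm
    · intro _; exact (hsign 1 hone).1 h2a
  · have hne : (Z \ Wz).Nonempty := by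
      rw [← Finset.card_pos, Finset.card_sdiff_of_subset hWzZ, hWzcard]
      omega
    obtain ⟨m, hm⟩ := hne
    rw [Finset.mem_sdiff] at hm
    have hmc : t m = c := (Finset.mem_filter.1 hm.1).2
    refine ⟨m, W, (Finset.filter_subset _ _) hm.1, hmc, hWsub, hWcard, hsign, ?_⟩
    constructor
    · intro h1W
      exact absurd h1W ((hsign 1 hone).2 h3a)
    · intro hmW
      rcases Finset.mem_union.1 hmW with h | h
      · exact absurd (Finset.mem_filter.1 h).2 (by rw [hmc]; exact lt_irrefl c)
      · exact absurd h hm.2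

lemma key (N k : ℕ) (hk : 2 ≤ k) (hN2 : N = 2 * k) (t : ℕ → ℝ) :
    ∃ (c : ℝ) (m : ℕ) (W : Finset ℕ), m ∈ Icc 1 N ∧ t m = c ∧
      (∑ i ∈ Icc 1 N, |t i - c|) ≤ (∑ i ∈ Icc 1 N, |t i|) ∧
      W ⊆ Icc 1 N ∧ W.card = k ∧
      (∀ i ∈ Icc 1 N, (c < t i → i ∈ W) ∧ (t i < c → i ∉ W)) ∧ ((1 ∈ W) ↔ (m ∈ W)) := by
  have hNk : k < N := by omega
  have hk1 : k - 1 < N := by omega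
  set f : Fin N → ℝ := fun j => t (j.val + 1) with hf
  set σ := Tuple.sort f with hσ
  have hg : Monotone fun j => t ((σ j).val + 1) := Tuple.monotone_sort f
  set pk1 : Fin N := ⟨k - 1, hk1⟩ with hpk1
  set pk : Fin N := ⟨k, hNk⟩ with hpk
  set c1 := t ((σ pk1).val + 1) with hc1
  set c2 := t ((σ pk).val + 1) with hc2
  by_cases hA1 : c2 < t 1
  · have hA : ((Icc 1 N).filter fun i => c2 < t i).card ≤ N - 1 - k :=
      boundA N t c2 σ hg pk (le_refl c2)
    have hB : ((Icc 1 N).filter fun i => t i < c2).card ≤ k :=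
      boundB N t c2 σ hg pk (le_refl c2)
    obtain ⟨m, W, h1, h2, h3, h4, h5, h6⟩ :=
      build N k hN2 (by omega) t c2 (by omega) hB
        (Or.inr (Or.inl ⟨hA1, by omega⟩))
    exact ⟨c2, m, W, h1, h2, median_le N k hN2 t c2 (by omega) hB, h3, h4, h5, h6⟩
  · by_cases hB1 : t 1 < c1
    · have hA : ((Icc 1 N).filter fun i => c1 < t i).card ≤ N - 1 - (k - 1) :=
        boundA N t c1 σ hg pk1 (le_refl c1)
      have hB : ((Icc 1 N).filter fun i => t i < c1).card ≤ k - 1 :=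
        boundB N t c1 σ hg pk1 (le_refl c1)
      obtain ⟨m, W, h1, h2, h3, h4, h5, h6⟩ :=
        build N k hN2 (by omega) t c1 (by omega) (by omega)
          (Or.inr (Or.inr ⟨hB1, by omega⟩))
      exact ⟨c1, m, W, h1, h2, median_le N k hN2 t c1 (by omega) (by omega), h3, h4, h5, h6⟩
    · have hA : ((Icc 1 N).filter fun i => t 1 < t i).card ≤ N - 1 - (k - 1) :=
        boundA N t (t 1) σ hg pk1 (le_of_not_gt hB1)
      have hB : ((Icc 1 N).filter fun i => t i < t 1).card ≤ k :=
        boundB N t (t 1) σ hg pk (le_of_not_gt hA1)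
      obtain ⟨m, W, h1, h2, h3, h4, h5, h6⟩ :=
        build N k hN2 (by omega) t (t 1) (by omega) hB (Or.inl rfl)
      exact ⟨t 1, m, W, h1, h2, median_le N k hN2 t (t 1) (by omega) hB, h3, h4, h5, h6⟩

theorem stmt12 (n N : ℕ) (hn : 3 ≤ n) (hN : N = n + 1) (hNe : Even N) :
    convexHull ℝ (Sconf n N) =
      ⋃ l ∈ LambdaEven N, ⋃ m ∈ Finset.Icc 1 N, ⋃ (_ : l m = l 1),
        convexHull ℝ (insert (0 : Fin n → ℝ)
          {x | ∃ i ∈ Finset.Icc 1 N, i ≠ m ∧ x = vPt n l i}) := by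
  classical
  apply le_antisymm
  · -- hard direction
    intro x hx
    obtain ⟨t, ht1, rfl⟩ := hull_sub n N hx
    obtain ⟨k, hk2⟩ := hNe
    have hN2 : N = 2 * k := by omega
    have hk : 2 ≤ k := by omega
    obtain ⟨c, m, W, hm, hmc, hmed, hWsub, hWcard, hsign, hiff⟩ := key N k hk hN2 t
    set l : ℕ → ℝ := fun i => if i ∈ W then 1 else -1 with hldef
    have hl : l ∈ LambdaEven N := by
      constructor
      · intro i _
        by_cases h : i ∈ W
        · exact Or.inl (by simp [hldef, h])
        · exact Or.inr (by simp [hldef, h])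
      · have hcg : ∀ i ∈ Finset.Icc 1 N,
            l i = (if i ∈ W then (2:ℝ) else 0) - 1 := by
          intro i _
          by_cases h : i ∈ W <;> simp [hldef, h] <;> norm_num
        rw [Finset.sum_congr rfl hcg, Finset.sum_sub_distrib, ← Finset.sum_filter,
          Finset.filter_mem_eq_inter, Finset.inter_eq_right.2 hWsub,
          Finset.sum_const, Finset.sum_const, hWcard]
        have hcard : (Finset.Icc 1 N).card = N := by simp [Nat.card_Icc]
        rw [hcard, nsmul_eq_mul, nsmul_eq_mul, hN2]
        push_cast
        ring
    have hlm : l m = l 1 := by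
      by_cases h : 1 ∈ W
      · simp only [hldef, if_pos (hiff.1 h), if_pos h]
      · simp only [hldef, if_neg (fun hc' => h (hiff.2 hc')), if_neg h]
    set S := ∑ i ∈ Finset.Icc 1 N, |t i - c| with hSdef
    have hS1 : S ≤ 1 := le_trans hmed ht1
    have hS0 : 0 ≤ S := Finset.sum_nonneg fun i _ => abs_nonneg _
    set w : ℕ → ℝ := fun i => if i = m then 1 - S else |t i - c| with hwdef
    set p : ℕ → (Fin n → ℝ) := fun i => if i = m then 0 else vPt n l i with hpdef
    have hw0 : ∀ i ∈ Finset.Icc 1 N, 0 ≤ w i := by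
      intro i _
      simp only [hwdef]
      by_cases h : i = m
      · rw [if_pos h]; linarith
      · rw [if_neg h]; exact abs_nonneg _
    have habs_m : |t m - c| = 0 := by rw [hmc]; simp
    have hSsplit : S = (∑ i ∈ Finset.Icc 1 N \ {m}, |t i - c|) + |t m - c| := by
      rw [hSdef]
      exact Finset.sum_eq_sum_sdiff_singleton_add hm fun i => |t i - c|
    have hwsum : ∑ i ∈ Finset.Icc 1 N, w i = 1 := by
      rw [Finset.sum_eq_sum_sdiff_singleton_add hm w]
      have e1 : ∑ i ∈ Finset.Icc 1 N \ {m}, w i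
          = ∑ i ∈ Finset.Icc 1 N \ {m}, |t i - c| := by
        apply Finset.sum_congr rfl
        intro i hi
        simp only [hwdef]
        exact if_neg fun h => (Finset.mem_sdiff.1 hi).2 (Finset.mem_singleton.2 h)
      have e2 : w m = 1 - S := by simp [hwdef]
      rw [e1, e2]
      have e3 : (∑ i ∈ Finset.Icc 1 N \ {m}, |t i - c|) = S := by
        rw [hSsplit, habs_m]; ring
      rw [e3]; ring
    have hxd : ∑ i ∈ Finset.Icc 1 N, t i • dVec n i
        = ∑ i ∈ Finset.Icc 1 N, w i • p i := by
      have step1 : ∑ i ∈ Finset.Icc 1 N, t i • dVec n i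
          = ∑ i ∈ Finset.Icc 1 N, (t i - c) • dVec n i := by
        have e1 : ∀ i ∈ Finset.Icc 1 N,
            (t i - c) • dVec n i = t i • dVec n i - c • dVec n i := by
          intro i _; rw [sub_smul]
        rw [eq_comm, Finset.sum_congr rfl e1, Finset.sum_sub_distrib,
          ← Finset.smul_sum, sum_dVec n N hN]
        simp
      rw [step1]
      apply Finset.sum_congr rfl
      intro i hi
      by_cases h : i = m
      · subst h
        simp only [hwdef, hpdef, if_pos rfl]
        rw [hmc]
        simp
      · simp only [hwdef, hpdef, if_neg h]
        rw [vPt, smul_smul]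
        congr 1
        rcases lt_trichotomy (t i) c with hlt | heq | hgt
        · have hiW : i ∉ W := (hsign i hi).2 hlt
          simp only [hldef, if_neg hiW]
          rw [abs_of_nonpos (by linarith)]
          ring
        · rw [heq]; simp
        · have hiW : i ∈ W := (hsign i hi).1 hgt
          simp only [hldef, if_pos hiW]
          rw [abs_of_nonneg (by linarith)]
          ring
    have hp : ∀ i ∈ Finset.Icc 1 N, p i ∈ (insert (0 : Fin n → ℝ)
        {x | ∃ i ∈ Finset.Icc 1 N, i ≠ m ∧ x = vPt n l i}) := by
      intro i hi
      simp only [hpdef]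
      by_cases h : i = m
      · rw [if_pos h]; exact Set.mem_insert _ _
      · rw [if_neg h]
        exact Set.mem_insert_iff.2 (Or.inr ⟨i, hi, h, rfl⟩)
    have hmem : (∑ i ∈ Finset.Icc 1 N, t i • dVec n i) ∈ convexHull ℝ
        (insert (0 : Fin n → ℝ) {x | ∃ i ∈ Finset.Icc 1 N, i ≠ m ∧ x = vPt n l i}) := by
      rw [hxd, ← Finset.centerMass_eq_of_sum_1 _ p hwsum]
      exact Finset.centerMass_mem_convexHull _ hw0 (by rw [hwsum]; norm_num) hp
    simp only [Set.mem_iUnion]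
    exact ⟨l, hl, m, hm, hlm, hmem⟩
  · refine Set.iUnion₂_subset fun l hl => Set.iUnion₂_subset fun m hm =>
      Set.iUnion_subset fun hlm => ?_
    apply convexHull_mono
    intro y hy
    rcases hy with rfl | ⟨i, hi, hne, rfl⟩
    · exact Set.mem_insert _ _
    · rcases hl.1 i hi with h | h
      · exact Set.mem_insert_iff.2 (Or.inr ⟨i, hi, Or.inl (by rw [vPt, h, one_smul])⟩)
      · exact Set.mem_insert_iff.2 (Or.inr ⟨i, hi, Or.inr (by rw [vPt, h, neg_one_smul])⟩)
end
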